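/- If the class of Gorenstein weak injective R-modules is closed under arbitrary direct sums, then R is left Noetherian. -/

import Mathlib

open CategoryTheory

universe u

noncomputable section

variable (R : Type u) [Ring R]

/-- Vanishing of `Ext^n_R(N, M)` for left `R`-modules, expressed via the `Ext` bifunctor
on the `ℤ`-linear abelian category `ModuleCat R`. -/
def ExtVanish (n : ℕ) (N M : ModuleCat.{u} R) : Prop :=
  Subsingleton (((_root_.Ext ℤ (ModuleCat.{u} R) n).obj (Opposite.op N)).obj M)

/-- An `R`-module is super finitely presented if it admits a resolution by
finitely generated projective modules. -/
def SuperFinitelyPresented (N : ModuleCat.{u} R) : Prop :=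
  ∃ (F : ℕ → ModuleCat.{u} R) (d : ∀ n, F (n + 1) →ₗ[R] F n) (ε : F 0 →ₗ[R] N),
    (∀ n, Module.Finite R (F n)) ∧ (∀ n, Module.Projective R (F n)) ∧
    Function.Surjective ε ∧ Function.Exact (d 0) ε ∧
    (∀ n, Function.Exact (d (n + 1)) (d n))

/-- An `R`-module `W` is weak injective if `Ext^1_R(N, W) = 0` for every super finitely
presented module `N`. -/
def WeakInjective (W : ModuleCat.{u} R) : Prop :=
  ∀ N : ModuleCat.{u} R, SuperFinitelyPresented R N → ExtVanish R 1 N W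

/-- `wid_R M ≤ n` : `Ext^{n+1}_R(N, M) = 0` for every super finitely presented `N`. -/
def WidLE (M : ModuleCat.{u} R) (n : ℕ) : Prop :=
  ∀ N : ModuleCat.{u} R, SuperFinitelyPresented R N → ExtVanish R (n + 1) N M

/-- The weak injective dimension, as an element of `ℕ∞`. -/
def Wid (M : ModuleCat.{u} R) : ℕ∞ :=
  sInf {c : ℕ∞ | ∃ n : ℕ, c = n ∧ WidLE R M n}

/-- A doubly infinite exact complex of injective modules which stays exact after applying
`Hom_R(W, -)` for every module `W` in the test class `𝒯`. -/
def IsTotallyAcyclicInjComplex (𝒯 : ModuleCat.{u} R → Prop)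
    (I : ℤ → ModuleCat.{u} R) (d : ∀ n : ℤ, I n →ₗ[R] I (n + 1)) : Prop :=
  (∀ n, Module.Injective R (I n)) ∧
  (∀ n, Function.Exact (d n) (d (n + 1))) ∧
  (∀ W : ModuleCat.{u} R, 𝒯 W → ∀ n,
    Function.Exact (fun g : W →ₗ[R] I n => (d n).comp g)
      (fun g : W →ₗ[R] I (n + 1) => (d (n + 1)).comp g))

/-- `M` is Gorenstein injective relative to the test class `𝒯` : `M` is the cokernel
`Coker (I_1 → I_0)` of a `Hom(𝒯, -)`-exact exact complex of injective modules. -/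
def GorensteinRelInjective (𝒯 : ModuleCat.{u} R → Prop) (M : ModuleCat.{u} R) : Prop :=
  ∃ (I : ℤ → ModuleCat.{u} R) (d : ∀ n : ℤ, I n →ₗ[R] I (n + 1)) (π : I 0 →ₗ[R] M),
    IsTotallyAcyclicInjComplex R 𝒯 I d ∧
    Function.Surjective π ∧ Function.Exact (d (-1)) π

/-- Gorenstein weak injective modules: the test class is that of weak injective modules. -/
def GorensteinWeakInjective (M : ModuleCat.{u} R) : Prop :=
  GorensteinRelInjective R (WeakInjective R) M

/-- Gorenstein injective modules: the test class is that of injective modules. -/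
def GorensteinInjective (M : ModuleCat.{u} R) : Prop :=
  GorensteinRelInjective R (fun E => Module.Injective R E) M

/-- The data of an exact sequence `0 → M → G^0 → ⋯ → G^n → 0` (the modules `G^i` for
`i > n` being trivial). -/
def IsFiniteCoresolution (M : ModuleCat.{u} R) (n : ℕ) (G : ℕ → ModuleCat.{u} R)
    (d : ∀ i, G i →ₗ[R] G (i + 1)) (ε : M →ₗ[R] G 0) : Prop :=
  Function.Injective ε ∧ Function.Exact ε (d 0) ∧
  (∀ i, Function.Exact (d i) (d (i + 1))) ∧
  (∀ i, n < i → ∀ x : G i, x = 0)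

/-- `Gwid_R M ≤ n` : `M` has a coresolution of length `n` by Gorenstein weak injective
modules. -/
def GwidLE (M : ModuleCat.{u} R) (n : ℕ) : Prop :=
  ∃ (G : ℕ → ModuleCat.{u} R) (d : ∀ i, G i →ₗ[R] G (i + 1)) (ε : M →ₗ[R] G 0),
    IsFiniteCoresolution R M n G d ε ∧ ∀ i, GorensteinWeakInjective R (G i)

/-- The Gorenstein weak injective dimension, as an element of `ℕ∞`. -/
def Gwid (M : ModuleCat.{u} R) : ℕ∞ :=
  sInf {c : ℕ∞ | ∃ n : ℕ, c = n ∧ GwidLE R M n}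

/-- `Gid_R M ≤ n`, via coresolutions by Gorenstein injective modules. -/
def GidLE (M : ModuleCat.{u} R) (n : ℕ) : Prop :=
  ∃ (G : ℕ → ModuleCat.{u} R) (d : ∀ i, G i →ₗ[R] G (i + 1)) (ε : M →ₗ[R] G 0),
    IsFiniteCoresolution R M n G d ε ∧ ∀ i, GorensteinInjective R (G i)

/-- The Gorenstein injective dimension, as an element of `ℕ∞`. -/
def Gid (M : ModuleCat.{u} R) : ℕ∞ :=
  sInf {c : ℕ∞ | ∃ n : ℕ, c = n ∧ GidLE R M n}

/-- `id_R M ≤ n`, via coresolutions by injective modules. -/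
def IdLE (M : ModuleCat.{u} R) (n : ℕ) : Prop :=
  ∃ (G : ℕ → ModuleCat.{u} R) (d : ∀ i, G i →ₗ[R] G (i + 1)) (ε : M →ₗ[R] G 0),
    IsFiniteCoresolution R M n G d ε ∧ ∀ i, Module.Injective R (G i)

/-- The injective dimension, as an element of `ℕ∞`. -/
def Idim (M : ModuleCat.{u} R) : ℕ∞ :=
  sInf {c : ℕ∞ | ∃ n : ℕ, c = n ∧ IdLE R M n}

/-- The data of an exact sequence `0 → P_n → ⋯ → P_0 → M → 0`. -/
def IsFiniteResolution (M : ModuleCat.{u} R) (n : ℕ) (P : ℕ → ModuleCat.{u} R)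
    (d : ∀ i, P (i + 1) →ₗ[R] P i) (ε : P 0 →ₗ[R] M) : Prop :=
  Function.Surjective ε ∧ Function.Exact (d 0) ε ∧
  (∀ i, Function.Exact (d (i + 1)) (d i)) ∧
  (∀ i, n < i → ∀ x : P i, x = 0)

/-- `pd_R M ≤ n`, via resolutions by projective modules. -/
def PdLE (M : ModuleCat.{u} R) (n : ℕ) : Prop :=
  ∃ (P : ℕ → ModuleCat.{u} R) (d : ∀ i, P (i + 1) →ₗ[R] P i) (ε : P 0 →ₗ[R] M),
    IsFiniteResolution R M n P d ε ∧ ∀ i, Module.Projective R (P i)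

end

variable (R : Type u) [Ring R]

/-- A short exact sequence `0 → L → M → N → 0` of `R`-modules. -/
def ShortExactSeq (L M N : ModuleCat.{u} R) (f : L →ₗ[R] M) (g : M →ₗ[R] N) : Prop :=
  Function.Injective f ∧ Function.Surjective g ∧ Function.Exact f g

/-- Exactness of `0 → Hom(C, X) → Hom(B, X) → Hom(A, X) → 0` induced by
`0 → A → B → C → 0`. -/
def HomContraExact (X : ModuleCat.{u} R) {A B C : ModuleCat.{u} R}
    (f : A →ₗ[R] B) (g : B →ₗ[R] C) : Prop :=
  Function.Injective (fun h : C →ₗ[R] X => h.comp g) ∧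
  Function.Exact (fun h : C →ₗ[R] X => h.comp g) (fun h : B →ₗ[R] X => h.comp f) ∧
  Function.Surjective (fun h : B →ₗ[R] X => h.comp f)

/-- A short exact sequence is `GWI`-copure exact if `Hom_R(-, X)` leaves it exact for
every Gorenstein weak injective module `X`. -/
def GWICopureExact {A B C : ModuleCat.{u} R} (f : A →ₗ[R] B) (g : B →ₗ[R] C) : Prop :=
  ShortExactSeq R A B C f g ∧
  ∀ X : ModuleCat.{u} R, GorensteinWeakInjective R X → HomContraExact R X f g

/-- `M` is `GWI`-copure injective if `Hom_R(-, M)` is exact on every `GWI`-copure exact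
sequence. -/
def GWICopureInjectiveMod (M : ModuleCat.{u} R) : Prop :=
  ∀ (A B C : ModuleCat.{u} R) (f : A →ₗ[R] B) (g : B →ₗ[R] C),
    GWICopureExact R f g → HomContraExact R M f g

/-- `φ : M → G` is a Gorenstein weak injective preenvelope of `M`. -/
def GWIPreenvelope (M G : ModuleCat.{u} R) (φ : M →ₗ[R] G) : Prop :=
  GorensteinWeakInjective R G ∧
  ∀ G' : ModuleCat.{u} R, GorensteinWeakInjective R G' →
    ∀ f : M →ₗ[R] G', ∃ g : G →ₗ[R] G', g.comp φ = f

/-- A `WI`-pure Tate injective resolution of `M` : an injective resolution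
`0 → M → E^0 → E^1 → ⋯`, a `WI`-pure exact complex `T` of injectives, and a chain map
`u : E → T` which is an isomorphism in all sufficiently large degrees. -/
def WIPureTateInjectiveResolution (M : ModuleCat.{u} R)
    (E : ℕ → ModuleCat.{u} R) (dE : ∀ n, E n →ₗ[R] E (n + 1)) (ε : M →ₗ[R] E 0)
    (T : ℤ → ModuleCat.{u} R) (dT : ∀ n : ℤ, T n →ₗ[R] T (n + 1))
    (u : ∀ n : ℕ, E n →ₗ[R] T n) : Prop :=
  (∀ n, Module.Injective R (E n)) ∧ Function.Injective ε ∧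
  Function.Exact ε (dE 0) ∧ (∀ n, Function.Exact (dE n) (dE (n + 1))) ∧
  IsTotallyAcyclicInjComplex R (WeakInjective R) T dT ∧
  (∀ n : ℕ, (dT n).comp (u n) = (u (n + 1)).comp (dE n)) ∧
  ∃ N : ℕ, ∀ n, N ≤ n → Function.Bijective (u n)

/-- Vanishing of the relative Tate cohomology `Êxt^i_GWI(N, M)` for all `i ∈ ℤ`,
computed from the `WI`-pure exact complex `T` : the complex `Hom_R(N, T)` is exact. -/
def ExtHatVanishesAll (N : ModuleCat.{u} R) (T : ℤ → ModuleCat.{u} R)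
    (dT : ∀ n : ℤ, T n →ₗ[R] T (n + 1)) : Prop :=
  ∀ n : ℤ, Function.Exact (fun g : N →ₗ[R] T n => (dT n).comp g)
    (fun g : N →ₗ[R] T (n + 1) => (dT (n + 1)).comp g)

/-! Injective modules are weak injective and Gorenstein weak injective. If `⨁ Mᵢ` is
Gorenstein weak injective with each `Mᵢ` weak injective, the `Hom(Mᵢ, -)`-exactness of its totally acyclic
complex `I` lifts every inclusion `Mᵢ → ⨁ Mᵢ` along `I⁰ → ⨁ Mᵢ`, so `⨁ Mᵢ` is a retract of
the injective `I⁰`. Hence direct sums of injective modules are injective, and the Bass–Papp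
argument makes `R` left Noetherian. -/

open Limits DirectSum

variable {R}

section WeakInjective

lemma isZero_ext_succ_of_injective (N W : ModuleCat.{u} R) [Injective W] (n : ℕ) :
    IsZero (((_root_.Ext ℤ (ModuleCat.{u} R) (n + 1)).obj (Opposite.op N)).obj W) := by
  obtain ⟨P⟩ := HasProjectiveResolution.out (Z := N)
  refine IsZero.of_iso ?_ (P.isoExt (n + 1) W)
  rw [← HomologicalComplex.exactAt_iff_isZero_homology,
    HomologicalComplex.exactAt_iff' _ n (n + 1) (n + 2) (by simp) (by simp),
    ShortComplex.moduleCat_exact_iff]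
  intro x hx
  dsimp [ChainComplex.linearYonedaObj] at x hx ⊢
  exact ⟨(P.exact_succ n).descToInjective x hx, (P.exact_succ n).comp_descToInjective x hx⟩

lemma weakInjective_of_injective (W : ModuleCat.{u} R) [Module.Injective R W] :
    WeakInjective R W := by
  have := Module.injective_object_of_injective_module (R := R) W
  exact fun N _ => ModuleCat.subsingleton_of_isZero (isZero_ext_succ_of_injective N W 0)

end WeakInjective

section GorensteinRelInjective

lemma Function.exact_ite_even {A : Type*} [Zero A] (n : ℤ) :
    Function.Exact (fun a : A => if Even n then a else 0)
      (fun a : A => if Even (n + 1) then a else 0) := by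
  intro a
  rcases Int.even_or_odd n with hn | hn
  · have hn' : ¬Even (n + 1) := by rw [Int.even_add_one, not_not]; exact hn
    simp [hn, hn']
  · simp [Int.not_even_iff_odd.mpr hn, hn.add_one]

/-- Witness: the complex `⋯ → E → E → E → ⋯` with `d n = id` for even `n` and `0` for odd
`n`, and `π = id` in degree `0`; it stays exact under every `Hom(W, -)`. -/
lemma gorensteinRelInjective_of_injective (𝒯 : ModuleCat.{u} R → Prop)
    (E : ModuleCat.{u} R) [Module.Injective R E] : GorensteinRelInjective R 𝒯 E := by
  let d : ∀ n : ℤ, E →ₗ[R] E := fun n => if Even n then LinearMap.id else 0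
  have hd : ∀ n, ⇑(d n) = fun a => if Even n then a else 0 := fun n => by
    funext a; by_cases hn : Even n <;> simp [d, hn]
  have hdcomp : ∀ (W : ModuleCat.{u} R) n,
      (fun g : W →ₗ[R] E => (d n).comp g) = fun g => if Even n then g else 0 := fun W n => by
    funext g; by_cases hn : Even n <;> simp [d, hn]
  refine ⟨fun _ => E, d, LinearMap.id,
    ⟨fun _ => inferInstance, fun n => ?_, fun W _ n => ?_⟩, Function.surjective_id, ?_⟩
  · simpa only [hd] using Function.exact_ite_even n
  · simpa only [hdcomp] using Function.exact_ite_even n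
  · rw [show d (-1) = 0 from if_neg (by decide)]
    exact (LinearMap.exact_zero_iff_injective _ _).mpr fun _ _ h => h

variable {W A B C D M : Type u} [AddCommGroup W] [AddCommGroup A] [AddCommGroup B]
  [AddCommGroup C] [AddCommGroup D] [AddCommGroup M] [Module R W] [Module R A] [Module R B]
  [Module R C] [Module R D] [Module R M]

/-- With `A → B → M → 0` and `A → B → C → D` exact, `M` embeds into `C` as `ker (C → D)`;
exactness of `Hom(W, -)` at `C` then lifts maps `W → M` along `B → M`. -/
lemma exists_comp_eq_of_exact_hom {f : A →ₗ[R] B} {π : B →ₗ[R] M} {g : B →ₗ[R] C}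
    {k : C →ₗ[R] D} (hπ : Function.Surjective π) (hfπ : Function.Exact f π)
    (hfg : Function.Exact f g) (hkg : k ∘ₗ g = 0)
    (hW : Function.Exact (fun ψ : W →ₗ[R] B => g ∘ₗ ψ) (fun χ : W →ₗ[R] C => k ∘ₗ χ))
    (φ : W →ₗ[R] M) : ∃ ψ : W →ₗ[R] B, π ∘ₗ ψ = φ := by
  let θ : M →ₗ[R] C := (LinearMap.range f).liftQ g (hfg · |>.mpr) ∘ₗ
    (hfπ.linearEquivOfSurjective hπ).symm.toLinearMap
  have hθπ : θ ∘ₗ π = g := by ext b; simp [θ]; rfl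
  have hθ : Function.Injective θ :=
    (LinearMap.injective_range_liftQ_of_exact hfg).comp (LinearEquiv.injective _)
  have hkθ : k ∘ₗ θ = 0 := by
    ext m
    obtain ⟨b, rfl⟩ := hπ m
    exact (congrArg k (LinearMap.congr_fun hθπ b)).trans (LinearMap.congr_fun hkg b)
  obtain ⟨ψ, hψ⟩ := (hW (θ ∘ₗ φ)).mp <| show k ∘ₗ θ ∘ₗ φ = 0 by
    rw [← LinearMap.comp_assoc, hkθ, LinearMap.zero_comp]
  refine ⟨ψ, LinearMap.ext fun w => hθ ?_⟩
  simpa [← hθπ] using LinearMap.congr_fun hψ w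

variable {𝒯 : ModuleCat.{u} R → Prop}

lemma GorensteinRelInjective.exists_injective_lift {X : ModuleCat.{u} R}
    (hX : GorensteinRelInjective R 𝒯 X) :
    ∃ (E : ModuleCat.{u} R) (π : E →ₗ[R] X), Module.Injective R E ∧
      ∀ V : ModuleCat.{u} R, 𝒯 V → ∀ φ : V →ₗ[R] X, ∃ ψ : V →ₗ[R] E, π ∘ₗ ψ = φ := by
  obtain ⟨I, d, π, ⟨hI, hex, hhom⟩, hπ, hπe⟩ := hX
  exact ⟨I 0, π, hI 0, fun V hV φ => exists_comp_eq_of_exact_hom hπ hπe (hex (-1))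
    (hex 0).linearMap_comp_eq_zero (hhom V hV 0) φ⟩

lemma Module.Injective.of_retract [Module.Injective R B] (s : M →ₗ[R] B) (π : B →ₗ[R] M)
    (hπs : π ∘ₗ s = LinearMap.id) : Module.Injective R M where
  out X Y _ _ _ _ i hi g := by
    obtain ⟨h, hh⟩ := Module.Injective.out i hi (s ∘ₗ g)
    exact ⟨π ∘ₗ h, fun x => by simpa [hh] using LinearMap.congr_fun hπs (g x)⟩

lemma injective_directSum_of_gorensteinRelInjective {ι : Type u} (X : ι → ModuleCat.{u} R)
    (hX : ∀ i, 𝒯 (X i)) (hS : GorensteinRelInjective R 𝒯 (ModuleCat.of R (⨁ i, X i))) :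
    Module.Injective R (⨁ i, X i) := by
  classical
  obtain ⟨E, π, hE, hlift⟩ := hS.exists_injective_lift
  choose ψ hψ using fun i => hlift (X i) (hX i) (lof R ι (fun i => X i) i)
  exact Module.Injective.of_retract (toModule R ι E ψ) π
    (linearMap_ext R fun i => LinearMap.ext fun x => by
      simpa using LinearMap.congr_fun (hψ i) x)

end GorensteinRelInjective

section BassPapp

variable {E : ℕ → Type u} [∀ n, AddCommGroup (E n)] [∀ n, Module R (E n)]

/-- `a ↦ (q n a)ₙ`, which has finite support since `a` lies in some `f m`, killed by `q n`
for `n ≥ m`. -/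
noncomputable def iSupToDirectSum (f : ℕ →o Ideal R) (q : ∀ n, R →ₗ[R] E n)
    (hq : ∀ n, f n ≤ LinearMap.ker (q n)) :
    (⨆ n, f n : Ideal R) →ₗ[R] ⨁ n : ULift.{u} ℕ, E n.down where
  toFun a :=
    have ha := (Submodule.mem_iSup_of_directed f f.monotone.directed_le).mp a.2
    DFinsupp.mk' (fun k => q k.down a) <| Trunc.mk
      ⟨(Multiset.range ha.choose).map ULift.up, fun k => by
        rcases lt_or_ge k.down ha.choose with hk | hk
        · exact .inl (Multiset.mem_map.mpr ⟨k.down, Multiset.mem_range.mpr hk, rfl⟩)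
        · exact .inr (hq _ (f.monotone hk ha.choose_spec))⟩
  map_add' a b := DFinsupp.ext fun k => (q k.down).map_add a b
  map_smul' r a := DFinsupp.ext fun k => (q k.down).map_smul r a

lemma iSupToDirectSum_apply (f : ℕ →o Ideal R) (q : ∀ n, R →ₗ[R] E n)
    (hq : ∀ n, f n ≤ LinearMap.ker (q n)) (a : (⨆ n, f n : Ideal R)) (k : ULift.{u} ℕ) :
    iSupToDirectSum f q hq a k = q k.down a :=
  rfl

/-- Bass–Papp: extend `iSupToDirectSum` to `R`; the image of `1` has finite support, and
every `a ∈ ⨆ n, f n` is killed by `q N` for `N` outside it. -/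
lemma chain_stabilizes_of_injective_directSum (f : ℕ →o Ideal R) (q : ∀ n, R →ₗ[R] E n)
    (hq : ∀ n, LinearMap.ker (q n) = f n)
    [Module.Injective R (⨁ n : ULift.{u} ℕ, E n.down)] :
    ∃ N, ∀ m, N ≤ m → f N = f m := by
  classical
  obtain ⟨g, hg⟩ := Module.Injective.extension_property R _ _ _ (Submodule.subtype _)
    (Submodule.injective_subtype _) (iSupToDirectSum f q fun n => (hq n).ge)
  obtain ⟨k, hk⟩ := Infinite.exists_notMem_finset (g 1).support
  refine ⟨k.down, fun m hm => le_antisymm (f.monotone hm) fun a ha => ?_⟩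
  have haI : a ∈ ⨆ n, f n := le_iSup f m ha
  have hga : g a k = q k.down a := by
    rw [← iSupToDirectSum_apply f q (fun n => (hq n).ge) ⟨a, haI⟩]
    exact congrArg (· k) (LinearMap.congr_fun hg ⟨a, haI⟩)
  rw [← hq, LinearMap.mem_ker, ← hga, ← mul_one a, ← smul_eq_mul, map_smul,
    DirectSum.smul_apply, DFinsupp.notMem_support_iff.mp hk, smul_zero]

theorem isNoetherianRing_of_injective_directSum
    (h : ∀ X : ULift.{u} ℕ → ModuleCat.{u} R, (∀ i, Module.Injective R (X i)) →
      Module.Injective R (⨁ i, X i)) :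
    IsNoetherianRing R := by
  rw [isNoetherianRing_iff, ← monotone_stabilizes_iff_noetherian]
  intro f
  let Q : ℕ → ModuleCat.{u} R := fun n => ModuleCat.of R (R ⧸ f n)
  let q : ∀ n, R →ₗ[R] ↥(Injective.under (Q n)) := fun n => (Injective.ι (Q n)).hom ∘ₗ (f n).mkQ
  have hq : ∀ n, LinearMap.ker (q n) = f n := fun n => by
    rw [LinearMap.ker_comp_of_ker_eq_bot _ (LinearMap.ker_eq_bot.mpr
      ((ModuleCat.mono_iff_injective _).mp inferInstance)), Submodule.ker_mkQ]
  have := h (fun i => Injective.under (Q i.down))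
    fun i => Module.injective_module_of_injective_object R _
      (inj := inferInstanceAs (Injective (Injective.under (Q i.down))))
  exact chain_stabilizes_of_injective_directSum f q hq

end BassPapp

/-- If the class of Gorenstein weak injective modules is closed under arbitrary direct
sums, then `R` is left Noetherian. -/
theorem isNoetherianRing_of_gorensteinWeakInjective_directSum
    (h : ∀ (ι : Type u) (M : ι → ModuleCat.{u} R),
      (∀ i, GorensteinWeakInjective R (M i)) →
      GorensteinWeakInjective R (ModuleCat.of R (DirectSum ι (fun i => ↥(M i))))) :
    IsNoetherianRing R :=
  isNoetherianRing_of_injective_directSum fun X _ =>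
    injective_directSum_of_gorensteinRelInjective X (fun i => weakInjective_of_injective (X i))
      (h _ X fun i => gorensteinRelInjective_of_injective _ (X i))
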